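/- Let k > n ≥ 2. There exists a deterministic adaptive strategy s of the codebreaker — a function s mapping each finite list of previous answers to a next query, such that every query produced is an injective code [n] → [k] — with the following property: for every injective secret code y : [n] → [k], in the play against y (where the t-th query is q_t := s(a_1, …, a_{t−1}) and the t-th answer is a_t := black(q_t, y)) there is some t ≤ (n − 2)·⌈log₂ n⌉ + k + 1 with q_t = y. In other words, Black-Peg AB-Mastermind with n positions and k > n colors can be solved with at most (n − 2)⌈log₂ n⌉ + k + 1 queries. -/

import Mathlib

/-- `black w x` is the number of positions where the codes `w` and `x` coincide. -/
def black {n k : ℕ} (w x : Fin n → Fin k) : ℕ :=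
  (Finset.univ.filter fun i => w i = x i).card

/-- `hist s y t` is the list of answers `[a_1, …, a_t]` produced in the play of the
adaptive strategy `s` against the secret code `y`: the `(t+1)`-st query is
`q_{t+1} = s (hist s y t)` and its answer is `a_{t+1} = black q_{t+1} y`. -/
def hist {n k : ℕ} (s : List ℕ → Fin n → Fin k) (y : Fin n → Fin k) : ℕ → List ℕ
  | 0 => []
  | t + 1 => hist s y t ++ [black (s (hist s y t)) y]

/-!
Write every code as `i ↦ i + σ i (mod k)` with a *shift function* `σ`. Then `black q y` counts
the positions where the shifts of `q` and `y` agree, and a code whose shift jumps from `c - 1`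
to `c` at a single threshold `j` is still injective because `k > n`.

The `k - 1` constant-shift queries give the number of positions carrying each shift (the last
count follows from the others), and since `k > n` some shift `e₀` is carried by no position.
The shifts `e₀ + 1, e₀ + 2, …` are then treated in turn. When all positions of shift `c - 1`
are known, the answer to the threshold-`j` query for `c - 1 | c` tells how many positions of
shift `c` lie below `j`, so a binary search finds the next position of shift `c` with at most
`⌈log₂ n⌉` queries. Once only two positions are unknown the shift counts leave at most two
candidates, and guessing them costs at most two more queries.
-/

namespace ABMastermind

open Finset

theorem card_filter_and_add_card_filter_and_not {α : Type*} [Fintype α] (P Q : α → Prop)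
    [DecidablePred P] [DecidablePred Q] :
    #{i | P i ∧ Q i} + #{i | P i ∧ ¬Q i} = #{i | P i} := by
  rw [← filter_filter, ← filter_filter]
  exact card_filter_add_card_filter_not _

theorem card_filter_val_lt_lt_iff {n : ℕ} (P : Fin n → Prop) [DecidablePred P] (a b : ℕ) :
    #{i | P i ∧ i.val < a} < #{i | P i ∧ i.val < b}
      ↔ ∃ i, P i ∧ a ≤ i.val ∧ i.val < b := by
  constructor
  · intro h
    by_contra! hno
    refine h.not_ge (card_le_card fun i hi => ?_)
    simp only [mem_filter, mem_univ, true_and] at hi ⊢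
    exact ⟨hi.1, by by_contra! hai; exact (hno i hi.1 hai).not_gt hi.2⟩
  · rintro ⟨i, hPi, hai, hib⟩
    refine card_lt_card ((ssubset_iff_of_subset fun i' hi' => ?_).2 ⟨i, ?_, ?_⟩)
    · simp only [mem_filter, mem_univ, true_and] at hi' ⊢
      exact ⟨hi'.1, hi'.2.trans_le (hai.trans hib.le)⟩
    · simp [hPi, hib]
    · simp [hai]

theorem eq_or_eq_comp_swap_of_card_fiber_eq {α β : Type*} [Fintype α] [DecidableEq α]
    [DecidableEq β] {σ τ : α → β} {p q : α} (hpq : p ≠ q)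
    (hout : ∀ i, i ≠ p → i ≠ q → τ i = σ i)
    (hcard : ∀ v, #{i | τ i = v} = #{i | σ i = v}) :
    τ = σ ∨ τ = σ ∘ Equiv.swap p q := by
  have hsplit (f : α → β) (v : β) : #{i | f i = v}
      = ∑ i ∈ univ \ {p, q}, (if f i = v then 1 else 0)
        + ((if f p = v then 1 else 0) + (if f q = v then 1 else 0)) := by
    rw [card_filter, ← sum_sdiff (subset_univ {p, q}), sum_pair hpq]
  have hpair (v : β) : (if τ p = v then 1 else 0) + (if τ q = v then 1 else 0)
      = (if σ p = v then 1 else 0) + (if σ q = v then 1 else 0) := by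
    have hrest : ∑ i ∈ univ \ {p, q}, (if τ i = v then 1 else 0)
        = ∑ i ∈ univ \ {p, q}, (if σ i = v then 1 else 0) :=
      sum_congr rfl fun i hi => by
        simp only [mem_sdiff, mem_univ, mem_insert, mem_singleton, true_and, not_or] at hi
        rw [hout i hi.1 hi.2]
    have := hcard v
    rw [hsplit, hsplit, hrest] at this
    omega
  have hvalues : τ p = σ p ∧ τ q = σ q ∨ τ p = σ q ∧ τ q = σ p := by
    by_cases hp : τ p = σ p
    · have h := hpair (σ q)
      rw [hp] at h
      split_ifs at h <;> simp_all
    · have h1 := hpair (σ p)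
      have h2 := hpair (σ q)
      simp only [hp, ↓reduceIte] at h1 h2
      have hq : τ q = σ p := by
        by_contra h
        rw [if_neg h] at h1
        omega
      have hqp : σ q ≠ σ p := by
        intro h
        rw [if_pos hq, if_pos h] at h1
        omega
      have hp' : τ p = σ q := by
        by_contra h
        rw [if_neg h, hq, if_neg hqp.symm] at h2
        omega
      exact Or.inr ⟨hp', hq⟩
  rcases hvalues with ⟨hp, hq⟩ | ⟨hp, hq⟩
  · left; funext i
    by_cases hip : i = p
    · rw [hip, hp]
    by_cases hiq : i = q
    · rw [hiq, hq]
    exact hout i hip hiq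
  · right; funext i
    by_cases hip : i = p
    · simp [hip, hp]
    by_cases hiq : i = q
    · simp [hiq, hq]
    simp [Equiv.swap_apply_of_ne_of_ne hip hiq, hout i hip hiq]

theorem clog_add_one_le_of_le_half {m d : ℕ} (hd : 2 ≤ d) (hm : m ≤ (d + 1) / 2) :
    Nat.clog 2 m + 1 ≤ Nat.clog 2 d := by
  rw [Nat.clog_of_two_le one_lt_two hd]
  exact Nat.add_le_add_right (Nat.clog_mono_right 2 hm) 1

variable {n k : ℕ}

section ShiftCodes

variable [NeZero k]

def shiftCode (σ : Fin n → Fin k) : Fin n → Fin k := fun i => Fin.ofNat k i + σ i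

def shifts (y : Fin n → Fin k) : Fin n → Fin k := fun i => y i - Fin.ofNat k i

def shiftCount (y : Fin n → Fin k) (v : Fin k) : ℕ := #{i | shifts y i = v}

theorem shiftCode_shifts (y : Fin n → Fin k) : shiftCode (shifts y) = y := by
  funext i
  simp [shiftCode, shifts]

theorem black_shiftCode (σ y : Fin n → Fin k) :
    black (shiftCode σ) y = #{i | σ i = shifts y i} := by
  unfold black
  congr 1
  ext i
  rw [mem_filter, mem_filter]
  simp [shiftCode, shifts, eq_sub_iff_add_eq']

theorem sum_shiftCount (y : Fin n → Fin k) : ∑ v, shiftCount y v = n := by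
  simp only [shiftCount]
  rw [← card_eq_sum_card_fiberwise (fun _ _ => mem_univ _), card_univ, Fintype.card_fin]

theorem exists_shiftCount_eq_zero (hk : n < k) (y : Fin n → Fin k) :
    ∃ v, shiftCount y v = 0 := by
  obtain ⟨v, hv⟩ : ∃ v, ∀ i, shifts y i ≠ v := by
    by_contra! h
    have := Fintype.card_le_of_surjective _ h
    simp only [Fintype.card_fin] at this
    omega
  exact ⟨v, card_eq_zero.2 (filter_eq_empty_iff.2 fun i _ => hv i)⟩

theorem ofNat_val_injective (hk : n ≤ k) : Function.Injective fun i : Fin n => Fin.ofNat k i := by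
  intro i i' h
  simpa [Fin.ext_iff, Nat.mod_eq_of_lt (i.2.trans_le hk), Nat.mod_eq_of_lt (i'.2.trans_le hk)]
    using h

theorem shiftCode_const_injective (hk : n ≤ k) (c : Fin k) :
    Function.Injective (shiftCode fun _ : Fin n => c) :=
  fun _ _ h => ofNat_val_injective hk (add_right_cancel h)

def splitCode (c : Fin k) (j : ℕ) : Fin n → Fin k :=
  shiftCode fun i => if i.val < j then c - 1 else c

theorem splitCode_injective (hk : n < k) (c : Fin k) (j : ℕ) :
    Function.Injective (splitCode (n := n) c j) := by
  have hcross (i i' : Fin n) (hi : i.val < j) (hi' : ¬i'.val < j) :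
      splitCode c j i ≠ splitCode c j i' := by
    intro h
    simp only [splitCode, shiftCode, if_pos hi, if_neg hi'] at h
    have h1 : Fin.ofNat k i = Fin.ofNat k i' + 1 := by
      rw [← sub_eq_zero] at h ⊢
      rw [← h]
      abel
    have h2 := congrArg Fin.val h1
    rw [Fin.val_add, Fin.val_ofNat, Fin.val_ofNat, Fin.val_one', Nat.mod_eq_of_lt (i.2.trans hk),
      Nat.mod_eq_of_lt (i'.2.trans hk), Nat.mod_eq_of_lt (by omega : 1 < k),
      Nat.mod_eq_of_lt (by omega : i'.val + 1 < k)] at h2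
    omega
  intro i i' h
  by_cases hi : i.val < j <;> by_cases hi' : i'.val < j
  · simp only [splitCode, shiftCode, if_pos hi, if_pos hi'] at h
    exact ofNat_val_injective hk.le (add_right_cancel h)
  · exact absurd h (hcross i i' hi hi')
  · exact absurd h.symm (hcross i' i hi' hi)
  · simp only [splitCode, shiftCode, if_neg hi, if_neg hi'] at h
    exact ofNat_val_injective hk.le (add_right_cancel h)

theorem black_splitCode (c : Fin k) (j : ℕ) (y : Fin n → Fin k) :
    black (splitCode c j) y
      = #{i | shifts y i = c - 1 ∧ i.val < j} + #{i | shifts y i = c ∧ ¬i.val < j} := by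
  rw [splitCode, black_shiftCode,
    ← card_filter_and_add_card_filter_and_not _ (fun i : Fin n => i.val < j)]
  congr 2 <;> ext i <;> by_cases h : i.val < j <;> simp [h, eq_comm]

def rank (y : Fin n → Fin k) (e0 : Fin k) (i : Fin n) : ℕ := (shifts y i - e0).val

section Rank

variable {y : Fin n → Fin k} {e0 : Fin k} {t : ℕ}

theorem rank_lt (i : Fin n) : rank y e0 i < k := Fin.isLt _

theorem shifts_eq_iff_rank_eq (ht : t < k) (i : Fin n) :
    shifts y i = e0 + Fin.ofNat k t ↔ rank y e0 i = t := by
  rw [← sub_eq_iff_eq_add', rank, Fin.ext_iff, Fin.val_ofNat, Nat.mod_eq_of_lt ht]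

theorem add_ofNat_sub_one (ht : 1 ≤ t) : e0 + Fin.ofNat k t - 1 = e0 + Fin.ofNat k (t - 1) := by
  rw [sub_eq_iff_eq_add, add_assoc]
  congr 1
  ext
  simp only [Fin.val_add, Fin.val_ofNat, Fin.val_one', Nat.add_mod_mod, Nat.mod_add_mod,
    Nat.sub_add_cancel ht]

theorem shiftCount_eq_card_rank_eq (ht : t < k) :
    shiftCount y (e0 + Fin.ofNat k t) = #{i | rank y e0 i = t} := by
  simp only [shiftCount, shifts_eq_iff_rank_eq ht]

end Rank

/-- Positions are located in lexicographic order of `(rank, position)`; this is the knowledge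
once the next one to be located is `(t, lo)`. -/
def knownOf (y : Fin n → Fin k) (e0 : Fin k) (t lo : ℕ) : Fin n → Option (Fin k) := fun i =>
  if rank y e0 i < t ∨ rank y e0 i = t ∧ i.val < lo then some (shifts y i) else none

section KnownOf

variable {y : Fin n → Fin k} {e0 : Fin k} {t lo : ℕ}

theorem knownOf_eq_some_iff {i : Fin n} {v : Fin k} :
    knownOf y e0 t lo i = some v
      ↔ (rank y e0 i < t ∨ rank y e0 i = t ∧ i.val < lo) ∧ shifts y i = v := by
  unfold knownOf
  split_ifs with h <;> simp [h]

theorem knownOf_eq_none_iff {i : Fin n} :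
    knownOf y e0 t lo i = none ↔ t < rank y e0 i ∨ rank y e0 i = t ∧ lo ≤ i.val := by
  unfold knownOf
  split_ifs with h <;> simp <;> omega

theorem knownOf_eq_some_cur_iff (ht : t < k) {i : Fin n} :
    knownOf y e0 t lo i = some (e0 + Fin.ofNat k t) ↔ rank y e0 i = t ∧ i.val < lo := by
  rw [knownOf_eq_some_iff, shifts_eq_iff_rank_eq ht]
  omega

theorem knownOf_eq_some_prev_iff (h1 : 1 ≤ t) (ht : t < k) {i : Fin n} :
    knownOf y e0 t lo i = some (e0 + Fin.ofNat k t - 1)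
      ↔ shifts y i = e0 + Fin.ofNat k t - 1 := by
  rw [knownOf_eq_some_iff, add_ofNat_sub_one h1, shifts_eq_iff_rank_eq (by omega)]
  omega

theorem knownOf_congr_lo {lo' : ℕ} (h : ∀ i, rank y e0 i = t → (i.val < lo ↔ i.val < lo')) :
    knownOf y e0 t lo = knownOf y e0 t lo' := by
  funext i
  unfold knownOf
  by_cases hi : rank y e0 i = t
  · simp only [hi, lt_irrefl, false_or, true_and, h i hi]
  · simp only [hi, false_and, or_false]

theorem knownOf_succ_zero (h : ∀ i, rank y e0 i = t → i.val < lo) :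
    knownOf y e0 t lo = knownOf y e0 (t + 1) 0 := by
  funext i
  unfold knownOf
  have := h i
  congr 1
  apply propext
  omega

theorem knownOf_one_zero (h : shiftCount y e0 = 0) : knownOf y e0 1 0 = fun _ => none := by
  funext i
  rw [knownOf_eq_none_iff]
  have hr : rank y e0 i ≠ 0 := by
    intro hr
    have hi : shifts y i = e0 := by simpa using (shifts_eq_iff_rank_eq (NeZero.pos k) i).2 hr
    rw [shiftCount, card_eq_zero, filter_eq_empty_iff] at h
    exact h (mem_univ i) hi
  omega

end KnownOf

end ShiftCodes

def unknownCount (known : Fin n → Option (Fin k)) : ℕ := #{i | known i = none}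

theorem unknownCount_le (known : Fin n → Option (Fin k)) : unknownCount known ≤ n :=
  (card_le_univ _).trans_eq (Fintype.card_fin n)

def record (known : Fin n → Option (Fin k)) (p : ℕ) (v : Fin k) : Fin n → Option (Fin k) :=
  fun i => if i.val = p then some v else known i

def Consistent (A : Fin k → ℕ) (known : Fin n → Option (Fin k)) (σ : Fin n → Fin k) :
    Prop :=
  (∀ i v, known i = some v → σ i = v) ∧ ∀ v, #{i | σ i = v} = A v

def countsOf (total : ℕ) (as : List ℕ) : Fin k → ℕ :=
  fun v => if v.val < as.length then as.getD v 0 else total - as.sum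

/-- `scan as`: `as` are the answers to the constant-shift queries `0, 1, …` so far.
`search A e0 known t lo hi`: `A v` positions carry shift `v`, none carries `e0`, `known` is the
part of the shift function learnt so far, the current shift is `e0 + t`, and the next position
carrying it is searched for in `[lo, hi)`.
`guess cs`: the candidates still to be tried. -/
inductive State (n k : ℕ) where
  | scan (answers : List ℕ)
  | search (A : Fin k → ℕ) (e0 : Fin k) (known : Fin n → Option (Fin k)) (t lo hi : ℕ)
  | guess (cands : List {f : Fin n → Fin k // Function.Injective f})

variable [NeZero k]

theorem countsOf_shiftCount (y : Fin n → Fin k) :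
    countsOf n ((List.range (k - 1)).map fun c => shiftCount y (Fin.ofNat k c)) = shiftCount y := by
  have hlist : ((List.range (k - 1)).map fun c => shiftCount y (Fin.ofNat k c)).sum
      = ∑ c ∈ range (k - 1), shiftCount y (Fin.ofNat k c) := by
    rw [sum_eq_multiset_sum, range_val, Multiset.range, Multiset.map_coe, Multiset.sum_coe]
  have htotal : ∑ c ∈ range (k - 1), shiftCount y (Fin.ofNat k c)
      + shiftCount y (Fin.ofNat k (k - 1)) = n := by
    have hk : range (k - 1 + 1) = range k := by rw [Nat.sub_add_cancel NeZero.one_le]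
    rw [← sum_range_succ, hk, ← Fin.sum_univ_eq_sum_range fun c => shiftCount y (Fin.ofNat k c)]
    simp only [Fin.ofNat_val_eq_self]
    exact sum_shiftCount y
  funext v
  simp only [countsOf, List.length_map, List.length_range]
  split_ifs with hv
  · simp [List.getD_eq_getElem?_getD, List.getElem?_range hv]
  · have : Fin.ofNat k (k - 1) = v := by
      ext
      rw [Fin.val_ofNat, Nat.mod_eq_of_lt (Nat.sub_lt (NeZero.pos k) one_pos)]
      omega
    rw [hlist, ← this]
    omega

noncomputable def zeroShift (A : Fin k → ℕ) : Fin k := Classical.epsilon fun v => A v = 0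

theorem apply_zeroShift_eq_zero {A : Fin k → ℕ} (h : ∃ v, A v = 0) : A (zeroShift A) = 0 :=
  Classical.epsilon_spec h

open Classical in
noncomputable def candidates (A : Fin k → ℕ) (known : Fin n → Option (Fin k)) :
    List {f : Fin n → Fin k // Function.Injective f} :=
  (univ.filter fun f => Consistent A known (shifts f.1)).toList

/-- Moves on, without a query, to the next state that needs one. `fuel` only ensures
termination; `n + k` always suffices. -/
noncomputable def settle (A : Fin k → ℕ) (e0 : Fin k) :
    ℕ → (Fin n → Option (Fin k)) → ℕ → ℕ → State n k
  | 0, _, _, _ => .guess []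
  | fuel + 1, known, t, lo =>
    if unknownCount known ≤ 2 then .guess (candidates A known)
    else if A (e0 + Fin.ofNat k t) ≤ #{i | known i = some (e0 + Fin.ofNat k t)} then
      settle A e0 fuel known (t + 1) 0
    else if lo + 2 ≤ n then .search A e0 known t lo n
    else settle A e0 fuel (record known lo (e0 + Fin.ofNat k t)) t (lo + 1)

noncomputable def narrow (A : Fin k → ℕ) (e0 : Fin k) (known : Fin n → Option (Fin k))
    (t lo hi : ℕ) : State n k :=
  if lo + 2 ≤ hi then .search A e0 known t lo hi
  else settle A e0 (n + k) (record known lo (e0 + Fin.ofNat k t)) t (lo + 1)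

namespace State

def query : State n k → Fin n → Fin k
  | scan as => shiftCode fun _ => Fin.ofNat k as.length
  | search _ e0 _ t lo hi => splitCode (e0 + Fin.ofNat k t) ((lo + hi) / 2)
  | guess [] => shiftCode fun _ => 0
  | guess (f :: _) => f.1

noncomputable def update : State n k → ℕ → State n k
  | scan as, x =>
    if as.length + 2 < k then scan (as ++ [x])
    else settle (countsOf n (as ++ [x])) (zeroShift (countsOf n (as ++ [x]))) (n + k)
      (fun _ => none) 1 0
  | search A e0 known t lo hi, x =>
    let c := e0 + Fin.ofNat k t
    let j := (lo + hi) / 2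
    -- `x = #{i < j | shift c - 1} + #{i ≥ j | shift c}`, and all positions of shift `c - 1` are
    -- known, so the right-hand side below is `#{i < j | shift c}`.
    if #{i | known i = some c} < #{i | known i = some (c - 1) ∧ i.val < j} + A c - x then
      narrow A e0 known t lo j
    else narrow A e0 known t j hi
  | guess cs, _ => guess cs.tail

/-- Each of the first `n - 2` positions is located with at most `⌈log₂ n⌉` queries, and the
last two cost at most two guesses. -/
def potential : State n k → ℕ
  | scan as => (k - 1 - as.length) + (n - 2) * Nat.clog 2 n + 2
  | search _ _ known _ lo hi => Nat.clog 2 (hi - lo) + (unknownCount known - 3) * Nat.clog 2 n + 2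
  | guess cs => cs.length

noncomputable def step (y : Fin n → Fin k) (st : State n k) : State n k :=
  st.update (black st.query y)

end State

noncomputable def strategy : List ℕ → Fin n → Fin k :=
  fun h => (h.foldl State.update (State.scan [])).query

structure Locating (y : Fin n → Fin k) (A : Fin k → ℕ) (e0 : Fin k)
    (known : Fin n → Option (Fin k)) (t lo : ℕ) : Prop where
  counts : A = shiftCount y
  one_le : 1 ≤ t
  lt : t < k
  known_eq : known = knownOf y e0 t lo
  two_le : 2 ≤ unknownCount known

def State.Tracks (y : Fin n → Fin k) : State n k → Prop
  | .scan as => as.length + 1 < k ∧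
      as = (List.range as.length).map fun c => shiftCount y (Fin.ofNat k c)
  | .search A e0 known t lo hi => Locating y A e0 known t lo ∧ lo + 2 ≤ hi ∧
      3 ≤ unknownCount known ∧ ∃ i : Fin n, rank y e0 i = t ∧ lo ≤ i.val ∧ i.val < hi
  | .guess cs => ∃ f ∈ cs, f.1 = y

namespace Locating

variable {y : Fin n → Fin k} {A : Fin k → ℕ} {e0 : Fin k} {known : Fin n → Option (Fin k)}
  {t lo : ℕ}

theorem consistent (L : Locating y A e0 known t lo) : Consistent A known (shifts y) := by
  refine ⟨fun i v h => ?_, fun v => by rw [L.counts, shiftCount]⟩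
  rw [L.known_eq, knownOf_eq_some_iff] at h
  exact h.2

theorem card_known_eq_cur (L : Locating y A e0 known t lo) :
    #{i | known i = some (e0 + Fin.ofNat k t)} = #{i | rank y e0 i = t ∧ i.val < lo} := by
  simp only [L.known_eq, knownOf_eq_some_cur_iff L.lt]

theorem card_known_prev_below (L : Locating y A e0 known t lo) (j : ℕ) :
    #{i | known i = some (e0 + Fin.ofNat k t - 1) ∧ i.val < j}
      = #{i | shifts y i = e0 + Fin.ofNat k t - 1 ∧ i.val < j} := by
  simp only [L.known_eq, knownOf_eq_some_prev_iff L.one_le L.lt]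

theorem card_known_lt_iff (L : Locating y A e0 known t lo) :
    #{i | known i = some (e0 + Fin.ofNat k t)} < A (e0 + Fin.ofNat k t)
      ↔ ∃ i, rank y e0 i = t ∧ lo ≤ i.val := by
  have hall : A (e0 + Fin.ofNat k t) = #{i | rank y e0 i = t ∧ i.val < n} := by
    simp only [L.counts, shiftCount_eq_card_rank_eq L.lt, Fin.is_lt, and_true]
  rw [hall, L.card_known_eq_cur, card_filter_val_lt_lt_iff]
  simp only [Fin.is_lt, and_true]

theorem record_next (L : Locating y A e0 known t lo) {i : Fin n} (hr : rank y e0 i = t)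
    (hi : i.val = lo) (hu : 3 ≤ unknownCount known) :
    Locating y A e0 (record known lo (e0 + Fin.ofNat k t)) t (lo + 1) ∧
      unknownCount (record known lo (e0 + Fin.ofNat k t)) + 1 = unknownCount known := by
  have hknown : known i = none := by
    rw [L.known_eq, knownOf_eq_none_iff]
    omega
  have hloc : record known lo (e0 + Fin.ofNat k t) = knownOf y e0 t (lo + 1) := by
    funext i'
    rw [L.known_eq, record]
    split_ifs with hi'
    · obtain rfl : i' = i := Fin.ext (hi'.trans hi.symm)
      rw [eq_comm, knownOf_eq_some_iff, shifts_eq_iff_rank_eq L.lt]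
      omega
    · unfold knownOf
      congr 1
      apply propext
      omega
  have hcount : unknownCount (record known lo (e0 + Fin.ofNat k t)) + 1
      = unknownCount known := by
    have : ({i' | record known lo (e0 + Fin.ofNat k t) i' = none} : Finset (Fin n))
        = ({i' | known i' = none} : Finset (Fin n)).erase i := by
      ext i'
      rw [mem_filter, mem_erase, mem_filter]
      by_cases h : i' = i
      · simp [record, h, hi]
      · have : i'.val ≠ lo := hi ▸ Fin.val_ne_iff.2 h
        simp [record, h, this]
    rw [unknownCount, unknownCount, this, card_erase_of_mem (by simpa using hknown)]
    have := L.two_le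
    unfold unknownCount at this
    omega
  exact ⟨⟨L.counts, L.one_le, L.lt, hloc, by omega⟩, hcount⟩

end Locating

theorem exists_mem_candidates {y : Fin n → Fin k} (hy : Function.Injective y) {A : Fin k → ℕ}
    {known : Fin n → Option (Fin k)} (h : Consistent A known (shifts y)) :
    ∃ f ∈ candidates A known, f.1 = y := by
  classical
  exact ⟨⟨y, hy⟩, by simp [candidates, h], rfl⟩

theorem length_candidates_le_two {φ : Fin n → Fin k} {A : Fin k → ℕ}
    {known : Fin n → Option (Fin k)} (hφ : Consistent A known φ) (hu : unknownCount known = 2) :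
    (candidates A known).length ≤ 2 := by
  classical
  obtain ⟨p, q, hpq, hU⟩ := card_eq_two.1 hu
  have hshifts (σ : Fin n → Fin k) (hσ : Consistent A known σ) :
      σ = φ ∨ σ = φ ∘ Equiv.swap p q := by
    refine eq_or_eq_comp_swap_of_card_fiber_eq hpq (fun i hip hiq => ?_)
      fun v => (hσ.2 v).trans (hφ.2 v).symm
    obtain ⟨v, hv⟩ := Option.ne_none_iff_exists'.1 fun h => by
      have : i ∈ ({i | known i = none} : Finset (Fin n)) := by simpa using h
      rw [hU] at this
      simp_all
    rw [hσ.1 i v hv, hφ.1 i v hv]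
  rw [candidates, length_toList]
  refine (card_le_card_of_injOn (fun f => shifts f.1) (t := {φ, φ ∘ Equiv.swap p q})
    (fun f hf => ?_) fun f _ g _ hfg => ?_).trans card_le_two
  · simpa using hshifts _ (mem_filter.1 hf).2
  · exact Subtype.ext ((shiftCode_shifts f.1).symm.trans ((congrArg shiftCode hfg).trans
      (shiftCode_shifts g.1)))

section Play

variable {y : Fin n → Fin k} {A : Fin k → ℕ} {e0 : Fin k}

open State

theorem tracks_settle (hy : Function.Injective y) :
    ∀ (fuel : ℕ) (known : Fin n → Option (Fin k)) (t lo : ℕ), Locating y A e0 known t lo →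
      unknownCount known + (k - t) ≤ fuel →
      (settle A e0 fuel known t lo).Tracks y ∧
        (settle A e0 fuel known t lo).potential ≤ (unknownCount known - 2) * Nat.clog 2 n + 2
  | 0, _, _, _, L, hfuel => absurd hfuel (by have := L.lt; omega)
  | fuel + 1, known, t, lo, L, hfuel => by
    rw [settle]
    split_ifs with hu hdone hlo
    · refine ⟨exists_mem_candidates hy L.consistent, ?_⟩
      have := length_candidates_le_two L.consistent (by have := L.two_le; omega)
      simp only [potential]
      omega
    · have hall : ∀ i, rank y e0 i = t → i.val < lo := fun i hr => by
        by_contra! hlo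
        exact (not_lt.2 hdone) (L.card_known_lt_iff.2 ⟨i, hr, hlo⟩)
      obtain ⟨i, hi⟩ : ∃ i, known i = none := by
        by_contra! h
        simp [unknownCount, h] at hu
      rw [L.known_eq, knownOf_eq_none_iff] at hi
      have hnext : t + 1 < k := by
        have := rank_lt (y := y) (e0 := e0) i
        have := hall i
        omega
      have L' : Locating y A e0 known (t + 1) 0 :=
        ⟨L.counts, by omega, hnext, L.known_eq.trans (knownOf_succ_zero hall), L.two_le⟩
      exact tracks_settle hy fuel known (t + 1) 0 L' (by omega)
    · obtain ⟨i, hr, hlo'⟩ := L.card_known_lt_iff.1 (not_le.1 hdone)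
      refine ⟨⟨L, hlo, by omega, i, hr, hlo', i.2⟩, ?_⟩
      have hclog : Nat.clog 2 (n - lo) ≤ Nat.clog 2 n := Nat.clog_mono_right 2 (by omega)
      have hsplit : (unknownCount known - 2) * Nat.clog 2 n
          = (unknownCount known - 3) * Nat.clog 2 n + Nat.clog 2 n := by
        rw [show unknownCount known - 2 = unknownCount known - 3 + 1 by omega, add_mul, one_mul]
      simp only [potential]
      omega
    · obtain ⟨i, hr, hlo'⟩ := L.card_known_lt_iff.1 (not_le.1 hdone)
      obtain ⟨L', hu'⟩ := L.record_next hr (by have := i.2; omega) (by omega)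
      have hrec := tracks_settle hy fuel _ t (lo + 1) L' (by omega)
      exact ⟨hrec.1, hrec.2.trans (by gcongr; omega)⟩

theorem tracks_narrow (hy : Function.Injective y) {known : Fin n → Option (Fin k)} {t lo hi : ℕ}
    (L : Locating y A e0 known t lo) (hu : 3 ≤ unknownCount known)
    (hw : ∃ i : Fin n, rank y e0 i = t ∧ lo ≤ i.val ∧ i.val < hi) :
    (narrow A e0 known t lo hi).Tracks y ∧ (narrow A e0 known t lo hi).potential
      ≤ Nat.clog 2 (hi - lo) + (unknownCount known - 3) * Nat.clog 2 n + 2 := by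
  rw [narrow]
  split_ifs with hlo
  · exact ⟨⟨L, hlo, hu, hw⟩, le_rfl⟩
  · obtain ⟨i, hr, hlo', hhi⟩ := hw
    obtain ⟨L', hu'⟩ := L.record_next hr (by omega) hu
    have hrec := tracks_settle hy (n + k) _ t (lo + 1) L'
      (by have := unknownCount_le known; omega)
    have hsub : unknownCount known - 3
        = unknownCount (record known lo (e0 + Fin.ofNat k t)) - 2 := by
      omega
    exact ⟨hrec.1, hrec.2.trans (by rw [hsub]; omega)⟩

theorem tracks_update_search (hy : Function.Injective y) {known : Fin n → Option (Fin k)}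
    {t lo hi : ℕ} (T : (search A e0 known t lo hi).Tracks y) :
    (step y (search A e0 known t lo hi)).Tracks y ∧
      (step y (search A e0 known t lo hi)).potential < (search A e0 known t lo hi).potential := by
  obtain ⟨L, hhi, hu, i, hr, hlo, hhi'⟩ := T
  simp only [step, query, update, L.card_known_eq_cur]
  set j := (lo + hi) / 2
  have hbelow : #{i | known i = some (e0 + Fin.ofNat k t - 1) ∧ i.val < j}
      + A (e0 + Fin.ofNat k t) - black (splitCode (e0 + Fin.ofNat k t) j) y
      = #{i | rank y e0 i = t ∧ i.val < j} := by
    have hcur := card_filter_and_add_card_filter_and_not (fun i => shifts y i = e0 + Fin.ofNat k t)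
      (fun i : Fin n => i.val < j)
    simp only [shifts_eq_iff_rank_eq L.lt] at hcur
    rw [L.card_known_prev_below, black_splitCode, L.counts, shiftCount_eq_card_rank_eq L.lt,
      ← hcur]
    simp only [shifts_eq_iff_rank_eq L.lt]
    omega
  simp only [hbelow]
  split_ifs with hlt
  · have hnarrow := tracks_narrow hy L hu ((card_filter_val_lt_lt_iff _ _ _).1 hlt)
    have := clog_add_one_le_of_le_half (m := j - lo) (by omega : 2 ≤ hi - lo) (by omega)
    exact ⟨hnarrow.1, by rw [potential.eq_2]; omega⟩
  · have hnone := mt (card_filter_val_lt_lt_iff _ _ _).2 hlt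
    have L' : Locating y A e0 known t j := by
      refine ⟨L.counts, L.one_le, L.lt, L.known_eq.trans (knownOf_congr_lo fun i' hr' => ?_),
        L.two_le⟩
      exact ⟨fun h => by omega,
        fun h => by by_contra h'; exact hnone ⟨i', hr', by omega, h⟩⟩
    have hj : j ≤ i.val := by
      by_contra h
      exact hnone ⟨i, hr, hlo, by omega⟩
    have hnarrow := tracks_narrow hy L' hu ⟨i, hr, hj, hhi'⟩
    have := clog_add_one_le_of_le_half (m := hi - j) (by omega : 2 ≤ hi - lo) (by omega)
    exact ⟨hnarrow.1, by rw [potential.eq_2]; omega⟩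

theorem tracks_update_scan (hn : 2 ≤ n) (hk : n < k) (hy : Function.Injective y) {as : List ℕ}
    (T : (scan as).Tracks y) :
    (step y (scan as)).Tracks y ∧
      (step y (scan as)).potential < (scan as : State n k).potential := by
  obtain ⟨hlen, has⟩ := T
  have hx : black (shiftCode fun _ => Fin.ofNat k as.length) y
      = shiftCount y (Fin.ofNat k as.length) := by
    simp only [black_shiftCode, shiftCount, eq_comm]
  have has' : as ++ [shiftCount y (Fin.ofNat k as.length)]
      = (List.range (as.length + 1)).map fun c => shiftCount y (Fin.ofNat k c) := by
    rw [List.range_succ, List.map_append, ← has, List.map_singleton]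
  simp only [step, query, update, hx]
  split_ifs with hmore
  · refine ⟨⟨by simp only [List.length_append, List.length_singleton]; omega,
      by simpa using has'⟩, ?_⟩
    simp only [potential, List.length_append, List.length_singleton]
    omega
  · have hA : countsOf n (as ++ [shiftCount y (Fin.ofNat k as.length)]) = shiftCount y := by
      rw [has', show as.length + 1 = k - 1 by omega, countsOf_shiftCount]
    rw [hA]
    have L : Locating y (shiftCount y) (zeroShift (shiftCount y)) (fun _ => none) 1 0 :=
      ⟨rfl, le_rfl, by omega,
        (knownOf_one_zero (apply_zeroShift_eq_zero (exists_shiftCount_eq_zero hk y))).symm,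
        by simpa [unknownCount] using hn⟩
    have hrec := tracks_settle hy (n + k) _ 1 0 L (by simp [unknownCount])
    refine ⟨hrec.1, hrec.2.trans_lt ?_⟩
    simp only [unknownCount, filter_true, card_univ, Fintype.card_fin, potential]
    omega

theorem tracks_update_guess {cs : List {f : Fin n → Fin k // Function.Injective f}}
    (T : (guess cs).Tracks y) (hq : (guess cs).query ≠ y) :
    (step y (guess cs)).Tracks y ∧ (step y (guess cs)).potential < (guess cs).potential := by
  obtain ⟨f, hf, rfl⟩ := T
  cases cs with
  | nil => simp at hf
  | cons g cs =>
    have hfcs : f ∈ cs := (List.mem_cons.1 hf).resolve_left fun h => hq (by rw [← h]; rfl)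
    exact ⟨⟨f, hfcs, rfl⟩, by simp [step, update, potential]⟩

theorem tracks_step (hn : 2 ≤ n) (hk : n < k) (hy : Function.Injective y) {st : State n k}
    (T : st.Tracks y) (hq : st.query ≠ y) :
    (step y st).Tracks y ∧ (step y st).potential < st.potential := by
  cases st with
  | scan as => exact tracks_update_scan hn hk hy T
  | search A e0 known t lo hi => exact tracks_update_search hy T
  | guess cs => exact tracks_update_guess T hq

theorem potential_pos {st : State n k} (T : st.Tracks y) : 0 < st.potential := by
  cases st with
  | scan as => simp [potential]
  | search A e0 known t lo hi => simp [potential]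
  | guess cs =>
    obtain ⟨f, hf, -⟩ := T
    exact List.length_pos_of_mem hf

theorem exists_iterate_query_eq (hn : 2 ≤ n) (hk : n < k) (hy : Function.Injective y)
    (st : State n k) (T : st.Tracks y) : ∃ i < st.potential, ((step y)^[i] st).query = y := by
  induction hm : st.potential using Nat.strong_induction_on generalizing st with
  | _ m ih =>
    by_cases hq : st.query = y
    · exact ⟨0, hm ▸ potential_pos T, hq⟩
    obtain ⟨T', hlt⟩ := tracks_step hn hk hy T hq
    obtain ⟨i, hi, hiq⟩ := ih _ (hm ▸ hlt) _ T' rfl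
    exact ⟨i + 1, by omega, by rwa [Function.iterate_succ_apply]⟩

theorem query_injective (hk : n < k) : ∀ st : State n k, Function.Injective st.query
  | scan _ => shiftCode_const_injective hk.le _
  | search _ _ _ _ _ _ => splitCode_injective hk _ _
  | guess [] => shiftCode_const_injective hk.le 0
  | guess (f :: _) => f.2

theorem foldl_hist_strategy (t : ℕ) :
    (hist strategy y t).foldl update (scan []) = (step y)^[t] (scan []) := by
  induction t with
  | zero => rfl
  | succ t ih =>
    rw [hist, List.foldl_append, ih, Function.iterate_succ_apply']
    simp only [strategy, ih, List.foldl_cons, List.foldl_nil, step]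

end Play

end ABMastermind

/-- Black-Peg AB-Mastermind with `k > n` colors can be solved with at most
`(n - 2)⌈log₂ n⌉ + k + 1` queries (`Nat.clog 2 n = ⌈log₂ n⌉`); note that the query
`q_{t+1} = s (hist s y t)` is the `(t+1)`-st query, so `t < B` means that the code is
broken within the first `B` queries. -/
theorem stmt15 (n k : ℕ) (hn : 2 ≤ n) (hk : n < k) :
    ∃ s : List ℕ → Fin n → Fin k,
      (∀ h : List ℕ, Function.Injective (s h)) ∧
      ∀ y : Fin n → Fin k, Function.Injective y →
        ∃ t < (n - 2) * Nat.clog 2 n + k + 1, s (hist s y t) = y := by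
  have : NeZero k := ⟨by omega⟩
  refine ⟨ABMastermind.strategy, fun h => ABMastermind.query_injective hk _, fun y hy => ?_⟩
  obtain ⟨t, ht, hq⟩ := ABMastermind.exists_iterate_query_eq hn hk hy (.scan [])
    ⟨by simp only [List.length_nil]; omega, rfl⟩
  refine ⟨t, by simp only [ABMastermind.State.potential, List.length_nil] at ht; omega, ?_⟩
  rw [ABMastermind.strategy, ABMastermind.foldl_hist_strategy]
  exact hq
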